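/- The sequence a_L := (1/2^L) · Σ_{n=0}^{L−1} √( C(L,n) · C(L,n+1) ), indexed by natural numbers L ≥ 1, converges to 1 as L → ∞, where C(L,n) is the binomial coefficient and the square roots are of real numbers. -/

import Mathlib

/-!
Each term √(C(L,n) C(L,n+1)) lies between the minimum and the mean of the two coefficients.
The means sum to at most 2^L, so a_L ≤ 1. Since the binomial coefficients increase up to
n = ⌊L/2⌋ and decrease afterwards, the minima sum to 2^L − C(L,⌊L/2⌋), so
1 − C(L,⌊L/2⌋)/2^L ≤ a_L. Finally the central coefficient is o(2^L): from
(m+1)·C(2m+2,m+1) = 2(2m+1)·C(2m,m) one gets (2m+1)·C(2m,m)² ≤ 16^m by induction,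
whence C(L,⌊L/2⌋)/2^L ≤ 1/√(L+1).
-/

open Finset Filter Topology

theorem Finset.sum_range_min_add_eq_sum_range_succ {M : Type*} [AddCommMonoid M] [LinearOrder M]
    (f : ℕ → M) {k L : ℕ} (hkL : k ≤ L) (hup : ∀ n < k, f n ≤ f (n + 1))
    (hdown : ∀ n, k ≤ n → f (n + 1) ≤ f n) :
    ∑ n ∈ range L, min (f n) (f (n + 1)) + f k = ∑ n ∈ range (L + 1), f n := by
  have hleft : ∑ n ∈ range k, min (f n) (f (n + 1)) = ∑ n ∈ range k, f n :=
    sum_congr rfl fun n hn => min_eq_left (hup n (mem_range.1 hn))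
  have hright : ∑ n ∈ Ico k L, min (f n) (f (n + 1)) = ∑ n ∈ Ico (k + 1) (L + 1), f n := by
    rw [← sum_Ico_add']
    exact sum_congr rfl fun n hn => min_eq_right (hdown n (mem_Ico.1 hn).1)
  rw [← sum_range_add_sum_Ico _ hkL, hleft, hright, add_right_comm, ← sum_range_succ,
    sum_range_add_sum_Ico _ (by omega)]

theorem Nat.choose_succ_le_of_half_le {n r : ℕ} (h : n / 2 ≤ r) :
    n.choose (r + 1) ≤ n.choose r := by
  refine Nat.le_of_mul_le_mul_right ?_ r.succ_pos
  rw [Nat.choose_succ_right_eq]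
  exact Nat.mul_le_mul_left _ (by omega)

theorem sum_range_min_choose_add_choose_half (L : ℕ) :
    ∑ n ∈ range L, min (L.choose n) (L.choose (n + 1)) + L.choose (L / 2) = 2 ^ L := by
  rw [sum_range_min_add_eq_sum_range_succ _ (L.div_le_self 2)
    (fun _ => Nat.choose_le_succ_of_lt_half_left) (fun _ => Nat.choose_succ_le_of_half_le),
    Nat.sum_range_choose]

theorem Nat.centralBinom_sq_mul_le (m : ℕ) : m.centralBinom ^ 2 * (2 * m + 1) ≤ 16 ^ m := by
  induction m with
  | zero => simp
  | succ m ih =>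
    have hrec := Nat.succ_mul_centralBinom_succ m
    refine Nat.le_of_mul_le_mul_left ?_ (pow_pos m.succ_pos 2)
    calc (m + 1) ^ 2 * ((m + 1).centralBinom ^ 2 * (2 * (m + 1) + 1))
        = 4 * (2 * m + 1) * (2 * m + 3) * (m.centralBinom ^ 2 * (2 * m + 1)) := by
          rw [← mul_assoc, ← mul_pow, hrec]; ring
      _ ≤ 4 * (2 * m + 1) * (2 * m + 3) * 16 ^ m := Nat.mul_le_mul_left _ ih
      _ ≤ 16 * (m + 1) ^ 2 * 16 ^ m := Nat.mul_le_mul_right _ (by nlinarith)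
      _ = (m + 1) ^ 2 * 16 ^ (m + 1) := by ring

theorem Nat.choose_half_sq_mul_le (L : ℕ) : L.choose (L / 2) ^ 2 * (L + 1) ≤ 4 ^ L := by
  obtain ⟨m, rfl | rfl⟩ := Nat.even_or_odd' L
  · rw [Nat.mul_div_cancel_left m two_pos, ← Nat.centralBinom_eq_two_mul_choose, pow_mul]
    exact Nat.centralBinom_sq_mul_le m
  · have hcb : (m + 1).centralBinom = 2 * (2 * m + 1).choose m := by
      rw [Nat.centralBinom_eq_two_mul_choose, show 2 * (m + 1) = 2 * m + 1 + 1 by ring,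
        Nat.choose_succ_succ, Nat.choose_symm_half]
      exact (two_mul _).symm
    have h16 : 16 ^ (m + 1) = 4 * 4 ^ (2 * m + 1) := by
      rw [show 16 = 4 ^ 2 by rfl, ← pow_mul]; ring
    have h := Nat.centralBinom_sq_mul_le (m + 1)
    rw [hcb, h16] at h
    rw [show (2 * m + 1) / 2 = m by omega]
    nlinarith

theorem Real.min_le_sqrt_mul {a b : ℝ} (ha : 0 ≤ a) (hb : 0 ≤ b) : min a b ≤ √(a * b) :=
  Real.le_sqrt_of_sq_le <| by
    rw [sq]; exact mul_le_mul (min_le_left a b) (min_le_right a b) (le_min ha hb) ha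

theorem Real.sqrt_mul_le_add_div_two {a b : ℝ} (ha : 0 ≤ a) (hb : 0 ≤ b) :
    √(a * b) ≤ (a + b) / 2 :=
  (Real.sqrt_le_left (by positivity)).2 (by nlinarith [sq_nonneg (a - b)])

theorem Nat.sum_range_choose_add_choose_succ_le (L : ℕ) :
    ∑ n ∈ range L, (L.choose n + L.choose (n + 1)) ≤ 2 * 2 ^ L := by
  have h := Nat.sum_range_choose L
  have hleft : ∑ n ∈ range L, L.choose n ≤ 2 ^ L := by
    rw [sum_range_succ] at h; omega
  have hright : ∑ n ∈ range L, L.choose (n + 1) ≤ 2 ^ L := by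
    rw [sum_range_succ'] at h; omega
  rw [sum_add_distrib]; omega

theorem sum_sqrt_choose_mul_choose_succ_le_two_pow (L : ℕ) :
    ∑ n ∈ range L, √((L.choose n : ℝ) * L.choose (n + 1)) ≤ 2 ^ L :=
  calc ∑ n ∈ range L, √((L.choose n : ℝ) * L.choose (n + 1))
      ≤ ∑ n ∈ range L, ((L.choose n : ℝ) + L.choose (n + 1)) / 2 :=
        sum_le_sum fun n _ => Real.sqrt_mul_le_add_div_two (by positivity) (by positivity)
    _ = ((∑ n ∈ range L, (L.choose n + L.choose (n + 1)) : ℕ) : ℝ) / 2 := by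
        push_cast; rw [sum_div]
    _ ≤ (2 * 2 ^ L : ℕ) / 2 := by
        gcongr; exact Nat.sum_range_choose_add_choose_succ_le L
    _ = 2 ^ L := by push_cast; ring

theorem two_pow_sub_choose_half_le_sum_sqrt_choose_mul_choose_succ (L : ℕ) :
    2 ^ L - (L.choose (L / 2) : ℝ) ≤
      ∑ n ∈ range L, √((L.choose n : ℝ) * L.choose (n + 1)) :=
  calc 2 ^ L - (L.choose (L / 2) : ℝ)
      = ((∑ n ∈ range L, min (L.choose n) (L.choose (n + 1)) : ℕ) : ℝ) := by
        have h := congrArg (Nat.cast : ℕ → ℝ) (sum_range_min_choose_add_choose_half L)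
        push_cast at h ⊢
        linarith
    _ ≤ ∑ n ∈ range L, √((L.choose n : ℝ) * L.choose (n + 1)) := by
        push_cast
        exact sum_le_sum fun n _ => Real.min_le_sqrt_mul (by positivity) (by positivity)

theorem tendsto_choose_half_div_two_pow :
    Tendsto (fun L : ℕ => (L.choose (L / 2) : ℝ) / 2 ^ L) atTop (𝓝 0) := by
  have hsqrt : Tendsto (fun L : ℕ => √(1 / ((L : ℝ) + 1))) atTop (𝓝 0) := by
    simpa [Function.comp_def] using
      (Real.continuous_sqrt.tendsto 0).comp tendsto_one_div_add_atTop_nhds_zero_nat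
  refine squeeze_zero (fun L => by positivity) (fun L => Real.le_sqrt_of_sq_le ?_) hsqrt
  have h : (L.choose (L / 2) : ℝ) ^ 2 * (L + 1) ≤ (2 ^ L) ^ 2 := by
    rw [← pow_mul, pow_mul']
    exact_mod_cast Nat.choose_half_sq_mul_le L
  rwa [div_pow, div_le_div_iff₀ (by positivity) (by positivity), one_mul]

theorem overlap_tendsto_one :
    Filter.Tendsto
      (fun L : ℕ => (1 : ℝ) / 2 ^ L *
        ∑ n ∈ Finset.range L,
          Real.sqrt (((L.choose n : ℝ)) * ((L.choose (n + 1) : ℝ))))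
      Filter.atTop (nhds 1) := by
  refine tendsto_of_tendsto_of_tendsto_of_le_of_le
    (g := fun L : ℕ => 1 - (L.choose (L / 2) : ℝ) / 2 ^ L)
    (by simpa using tendsto_const_nhds.sub tendsto_choose_half_div_two_pow) tendsto_const_nhds
    (fun L => ?_) (fun L => ?_)
  · rw [one_div_mul_eq_div, le_div_iff₀ (by positivity), sub_mul, one_mul,
      div_mul_cancel₀ _ (by positivity)]
    exact two_pow_sub_choose_half_le_sum_sqrt_choose_mul_choose_succ L
  · rw [one_div_mul_eq_div, div_le_one (by positivity)]
    exact sum_sqrt_choose_mul_choose_succ_le_two_pow L
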